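/- arXiv:2302.09469 — 2 statements merged into one kernel-verified Lean document; each statement's English description precedes it below -/
import Mathlib

section
/- Let $n \ge 1$, let $\Psi$ and $\Psi_0$ be $n \times n$ complex Hermitian positive definite matrices, let $a \in \mathbb{C}^n$, and let $c$ be a real number. If the linearized constraint $\mathrm{Re}(a^H \Psi_0^{-1} a) - \mathrm{Re}\big(a^H \Psi_0^{-1}(\Psi - \Psi_0)\Psi_0^{-1} a\big) \ge c$ holds, then the original constraint $\mathrm{Re}(a^H \Psi^{-1} a) \ge c$ holds. -/
open Matrix ComplexOrder

/-!
The map `Ψ ↦ Ψ⁻¹` is operator convex on positive definite matrices, and the SCA surrogate is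
its first-order Taylor expansion at `Ψ₀`. Concretely, the gap between `Ψ⁻¹` and its tangent is
`(Ψ⁻¹ - Ψ₀⁻¹) Ψ (Ψ⁻¹ - Ψ₀⁻¹)`, a congruence of `Ψ` and hence positive semidefinite; so the quadratic
form of `Ψ⁻¹` at `a` dominates that of the tangent, which is bounded below by `c`.
-/

namespace Matrix

variable {n R : Type*} [Fintype n] [DecidableEq n]

theorem inv_sub_tangent_eq [CommRing R] {A B : Matrix n n R} (hA : IsUnit A.det)
    (hB : IsUnit B.det) :
    A⁻¹ - (B⁻¹ - B⁻¹ * (A - B) * B⁻¹) = (A⁻¹ - B⁻¹) * A * (A⁻¹ - B⁻¹) := by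
  have hAA : A⁻¹ * A = 1 := nonsing_inv_mul A hA
  have hAA' : A * A⁻¹ = 1 := mul_nonsing_inv A hA
  have hBB : B⁻¹ * B = 1 := nonsing_inv_mul B hB
  simp only [Matrix.sub_mul, Matrix.mul_sub, hAA, hBB, Matrix.one_mul, Matrix.mul_assoc, hAA',
    Matrix.mul_one]
  abel

theorem PosSemidef.inv_sub_tangent [CommRing R] [PartialOrder R] [StarRing R]
    {A B : Matrix n n R} (hA : A.PosSemidef) (hA' : IsUnit A.det) (hB : B.IsHermitian)
    (hB' : IsUnit B.det) : (A⁻¹ - (B⁻¹ - B⁻¹ * (A - B) * B⁻¹)).PosSemidef := by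
  have hD : (A⁻¹ - B⁻¹).IsHermitian := hA.isHermitian.inv.sub hB.inv
  rw [inv_sub_tangent_eq hA' hB']
  simpa only [hD.eq] using hA.conjTranspose_mul_mul_same (A⁻¹ - B⁻¹)

end Matrix

theorem sca_constraint_subset_general
    (n : ℕ)
    (Ψ Ψ₀ : Matrix (Fin n) (Fin n) ℂ) (hΨ : Ψ.PosDef) (hΨ₀ : Ψ₀.PosDef)
    (a : Fin n → ℂ) (c : ℝ)
    (hlin : c ≤ (star a ⬝ᵥ Ψ₀⁻¹ *ᵥ a).re -
        (star a ⬝ᵥ (Ψ₀⁻¹ * (Ψ - Ψ₀) * Ψ₀⁻¹) *ᵥ a).re) :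
    c ≤ (star a ⬝ᵥ Ψ⁻¹ *ᵥ a).re := by
  have hgap := (hΨ.posSemidef.inv_sub_tangent hΨ.det_pos.ne'.isUnit hΨ₀.isHermitian
    hΨ₀.det_pos.ne'.isUnit).dotProduct_mulVec_nonneg a
  simp only [sub_mulVec, dotProduct_sub] at hgap
  have hgap_re := (Complex.le_def.mp hgap).1
  simp only [Complex.zero_re, Complex.sub_re] at hgap_re
  linarith

/-- The linearized (SCA surrogate) constraint implies the original
constraint: if `Re(aᴴ Ψ₀⁻¹ a) - Re(aᴴ Ψ₀⁻¹ (Ψ - Ψ₀) Ψ₀⁻¹ a) ≥ c` then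
`Re(aᴴ Ψ⁻¹ a) ≥ c`. -/
theorem sca_constraint_subset
    (n : ℕ) (hn : 1 ≤ n)
    (Ψ Ψ₀ : Matrix (Fin n) (Fin n) ℂ) (hΨ : Ψ.PosDef) (hΨ₀ : Ψ₀.PosDef)
    (a : Fin n → ℂ) (c : ℝ)
    (hlin : c ≤ (star a ⬝ᵥ Ψ₀⁻¹ *ᵥ a).re -
        (star a ⬝ᵥ (Ψ₀⁻¹ * (Ψ - Ψ₀) * Ψ₀⁻¹) *ᵥ a).re) :
    c ≤ (star a ⬝ᵥ Ψ⁻¹ *ᵥ a).re :=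
  sca_constraint_subset_general n Ψ Ψ₀ hΨ hΨ₀ a c hlin
end

section
/- Let $n \ge 1$ and $L \ge 1$. For each $l \in \{1, \dots, L\}$, let $\widehat V_l$ be an $n \times n$ complex Hermitian positive semidefinite matrix and $g_l \in \mathbb{C}^n$ a vector with $c_l := \mathrm{Re}(g_l^H \widehat V_l g_l) > 0$, and let $\widehat V_0$ be an $n \times n$ Hermitian positive semidefinite matrix. Define $v_l^* = c_l^{-1/2}\, \widehat V_l g_l$, $V_l^* = v_l^* (v_l^*)^H$ for $l = 1, \dots, L$, and $V_0^* = \sum_{l=1}^L \widehat V_l + \widehat V_0 - \sum_{l=1}^L V_l^*$. Then: (i) $V_0^*$ is Hermitian positive semidefinite; (ii) $\sum_{l=1}^L V_l^* + V_0^* = \sum_{l=1}^L \widehat V_l + \widehat V_0$, and in particular $\mathrm{tr}(V_0^*) + \sum_{l=1}^L \mathrm{tr}(V_l^*) = \mathrm{tr}(\widehat V_0) + \sum_{l=1}^L \mathrm{tr}(\widehat V_l)$; and (iii) $\mathrm{Re}(g_l^H V_l^* g_l) = \mathrm{Re}(g_l^H \widehat V_l g_l)$ for every $l \in \{1, \dots,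 L\}$. -/
/-!
Since `V₀* = V̂₀ + ∑ₗ (V̂ₗ - Vₗ*)`, positivity of `V₀*` reduces to `V̂ₗ - Vₗ* ⪰ 0`. For any `y`,
`yᴴ (V̂ₗ - Vₗ*) y = yᴴ V̂ₗ y - |gₗᴴ V̂ₗ y|² / cₗ`, which is nonnegative by the Cauchy–Schwarz
inequality for the semi-inner product `⟪u, w⟫ = uᴴ V̂ₗ w`, as `cₗ = ⟪gₗ, gₗ⟫`. The other claims
are bookkeeping, using `gₗᴴ Vₗ* gₗ = |gₗᴴ V̂ₗ gₗ|² / cₗ = cₗ`.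
-/

open Matrix ComplexOrder

namespace Matrix

variable {𝕜 n : Type*} [RCLike 𝕜]

theorem vecMulVec_real_smul_star (r : ℝ) (v : n → 𝕜) :
    vecMulVec (r • v) (star (r • v)) = (r ^ 2) • vecMulVec v (star v) := by
  rw [star_smul, star_trivial, smul_vecMulVec, vecMulVec_smul, smul_smul, sq]

variable [Fintype n] {A : Matrix n n 𝕜}

theorem IsHermitian.star_mulVec_dotProduct (hA : A.IsHermitian) (x y : n → 𝕜) :
    star (A *ᵥ x) ⬝ᵥ y = star x ⬝ᵥ A *ᵥ y := by
  rw [star_mulVec, hA.eq, dotProduct_mulVec]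

theorem IsHermitian.star_dotProduct_mulVec (hA : A.IsHermitian) (x y : n → 𝕜) :
    star (star x ⬝ᵥ A *ᵥ y) = star y ⬝ᵥ A *ᵥ x := by
  rw [← star_dotProduct, hA.star_mulVec_dotProduct]

theorem IsHermitian.ofReal_re_dotProduct_mulVec (hA : A.IsHermitian) (x : n → 𝕜) :
    (RCLike.re (star x ⬝ᵥ A *ᵥ x) : 𝕜) = star x ⬝ᵥ A *ᵥ x :=
  RCLike.conj_eq_iff_re.mp (hA.star_dotProduct_mulVec x x)

theorem dotProduct_vecMulVec_mulVec (x u v y : n → 𝕜) :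
    x ⬝ᵥ vecMulVec u v *ᵥ y = (x ⬝ᵥ u) * (v ⬝ᵥ y) := by
  rw [vecMulVec_mulVec, op_smul_eq_smul, dotProduct_smul, smul_eq_mul, mul_comm]

theorem IsHermitian.dotProduct_vecMulVec_mulVec_self (hA : A.IsHermitian) (x : n → 𝕜) :
    star x ⬝ᵥ vecMulVec (A *ᵥ x) (star (A *ᵥ x)) *ᵥ x = (star x ⬝ᵥ A *ᵥ x) ^ 2 := by
  rw [dotProduct_vecMulVec_mulVec, hA.star_mulVec_dotProduct, sq]

theorem PosSemidef.norm_dotProduct_mulVec_sq_le (hA : A.PosSemidef) (x y : n → 𝕜) :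
    ‖star x ⬝ᵥ A *ᵥ y‖ ^ 2 ≤
      RCLike.re (star x ⬝ᵥ A *ᵥ x) * RCLike.re (star y ⬝ᵥ A *ᵥ y) := by
  let _ := A.toSeminormedAddCommGroup hA
  let _ := A.toInnerProductSpace hA
  have hinner (u v : n → 𝕜) : inner 𝕜 u v = star u ⬝ᵥ A *ᵥ v := dotProduct_comm _ _
  have h := inner_mul_inner_self_le (𝕜 := 𝕜) x y
  rwa [hinner, hinner, hinner, hinner, ← hA.1.star_dotProduct_mulVec x y, norm_star, ← sq] at h

theorem PosSemidef.re_smul_sub_vecMulVec_mulVec (hA : A.PosSemidef) (x : n → 𝕜) :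
    (RCLike.re (star x ⬝ᵥ A *ᵥ x) • A - vecMulVec (A *ᵥ x) (star (A *ᵥ x))).PosSemidef := by
  set c := RCLike.re (star x ⬝ᵥ A *ᵥ x)
  refine .of_dotProduct_mulVec_nonneg
    ((hA.1.smul (.all c)).sub (posSemidef_vecMulVec_self_star _).1) fun y => ?_
  have hq : star y ⬝ᵥ (c • A - vecMulVec (A *ᵥ x) (star (A *ᵥ x))) *ᵥ y
      = ((c * RCLike.re (star y ⬝ᵥ A *ᵥ y) - ‖star x ⬝ᵥ A *ᵥ y‖ ^ 2 : ℝ) : 𝕜) := by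
    rw [sub_mulVec, dotProduct_sub, dotProduct_vecMulVec_mulVec, smul_mulVec, dotProduct_smul,
      hA.1.star_mulVec_dotProduct, ← hA.1.star_dotProduct_mulVec x y, RCLike.star_def,
      RCLike.conj_mul, RCLike.real_smul_eq_coe_mul, ← hA.1.ofReal_re_dotProduct_mulVec y]
    push_cast
    rfl
  rw [hq, RCLike.ofReal_nonneg, sub_nonneg]
  exact hA.norm_dotProduct_mulVec_sq_le x y

theorem PosSemidef.sub_inv_smul_vecMulVec_mulVec (hA : A.PosSemidef) {x : n → 𝕜}
    (hx : 0 < RCLike.re (star x ⬝ᵥ A *ᵥ x)) :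
    (A - (RCLike.re (star x ⬝ᵥ A *ᵥ x))⁻¹ • vecMulVec (A *ᵥ x) (star (A *ᵥ x))).PosSemidef := by
  have h := (hA.re_smul_sub_vecMulVec_mulVec x).smul (inv_nonneg.2 hx.le)
  rwa [smul_sub, inv_smul_smul₀ hx.ne'] at h

end Matrix

theorem rank_one_reconstruction_general
    (n L : ℕ)
    (Vhat : Fin L → Matrix (Fin n) (Fin n) ℂ)
    (hVhat : ∀ l, (Vhat l).PosSemidef)
    (g : Fin L → (Fin n → ℂ))
    (c : Fin L → ℝ) (hc : ∀ l, c l = (star (g l) ⬝ᵥ (Vhat l) *ᵥ (g l)).re)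
    (hcpos : ∀ l, 0 < c l)
    (V0hat : Matrix (Fin n) (Fin n) ℂ) (hV0hat : V0hat.PosSemidef)
    (vstar : Fin L → (Fin n → ℂ))
    (hvstar : ∀ l, vstar l = (((Real.sqrt (c l))⁻¹ : ℝ) : ℂ) • ((Vhat l) *ᵥ (g l)))
    (Vstar : Fin L → Matrix (Fin n) (Fin n) ℂ)
    (hVstar : ∀ l, Vstar l = vecMulVec (vstar l) (star (vstar l)))
    (V0star : Matrix (Fin n) (Fin n) ℂ)
    (hV0star : V0star = ∑ l, Vhat l + V0hat - ∑ l, Vstar l) :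
    V0star.PosSemidef ∧
    (∑ l, Vstar l + V0star = ∑ l, Vhat l + V0hat ∧
      V0star.trace + ∑ l, (Vstar l).trace =
        V0hat.trace + ∑ l, (Vhat l).trace) ∧
    ∀ l, (star (g l) ⬝ᵥ (Vstar l) *ᵥ (g l)).re =
        (star (g l) ⬝ᵥ (Vhat l) *ᵥ (g l)).re := by
  have hgAg (l) : star (g l) ⬝ᵥ Vhat l *ᵥ g l = c l := by
    rw [hc l]
    exact ((hVhat l).1.ofReal_re_dotProduct_mulVec (g l)).symm
  have hVstar' (l) : Vstar l = (c l)⁻¹ • vecMulVec (Vhat l *ᵥ g l) (star (Vhat l *ᵥ g l)) := by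
    rw [hVstar l, hvstar l, Complex.coe_smul, vecMulVec_real_smul_star, inv_pow,
      Real.sq_sqrt (hcpos l).le]
  have hdiff (l) : (Vhat l - Vstar l).PosSemidef := by
    have := (hVhat l).sub_inv_smul_vecMulVec_mulVec (x := g l)
    rw [RCLike.re_to_complex, ← hc l] at this
    exact hVstar' l ▸ this (hcpos l)
  have hsum : ∑ l, Vstar l + V0star = ∑ l, Vhat l + V0hat := by
    rw [hV0star]
    abel
  refine ⟨?_, ⟨hsum, ?_⟩, fun l => ?_⟩
  · rw [show V0star = ∑ l, (Vhat l - Vstar l) + V0hat by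
      rw [hV0star, Finset.sum_sub_distrib]; abel]
    exact (posSemidef_sum _ fun l _ => hdiff l).add hV0hat
  · simpa only [trace_add, trace_sum, add_comm] using congrArg trace hsum
  · rw [hVstar', smul_mulVec, dotProduct_smul, (hVhat l).1.dotProduct_vecMulVec_mulVec_self, hgAg,
      ← Complex.ofReal_pow, Complex.smul_re, Complex.ofReal_re, Complex.ofReal_re, smul_eq_mul,
      sq, inv_mul_cancel_left₀ (hcpos l).ne']

/-- Theorem 1 of the paper: from a feasible relaxed solution
`(V̂₀, …, V̂_L)` one constructs rank-one downlink covariances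
`Vₗ* = vₗ*(vₗ*)ᴴ` with `vₗ* = (gₗᴴ V̂ₗ gₗ)^{-1/2} V̂ₗ gₗ` and a radar
covariance `V₀* = ∑ₗ V̂ₗ + V̂₀ - ∑ₗ Vₗ*` such that:
(i) `V₀* ⪰ 0`; (ii) the total covariance and total transmit power (trace)
are unchanged; (iii) each desired-signal power `gₗᴴ Vₗ gₗ` is preserved. -/
theorem rank_one_reconstruction
    (n L : ℕ) (hn : 1 ≤ n) (hL : 1 ≤ L)
    (Vhat : Fin L → Matrix (Fin n) (Fin n) ℂ)
    (hVhat : ∀ l, (Vhat l).PosSemidef)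
    (g : Fin L → (Fin n → ℂ))
    (c : Fin L → ℝ) (hc : ∀ l, c l = (star (g l) ⬝ᵥ (Vhat l) *ᵥ (g l)).re)
    (hcpos : ∀ l, 0 < c l)
    (V0hat : Matrix (Fin n) (Fin n) ℂ) (hV0hat : V0hat.PosSemidef)
    (vstar : Fin L → (Fin n → ℂ))
    (hvstar : ∀ l, vstar l = (((Real.sqrt (c l))⁻¹ : ℝ) : ℂ) • ((Vhat l) *ᵥ (g l)))
    (Vstar : Fin L → Matrix (Fin n) (Fin n) ℂ)
    (hVstar : ∀ l, Vstar l = vecMulVec (vstar l) (star (vstar l)))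
    (V0star : Matrix (Fin n) (Fin n) ℂ)
    (hV0star : V0star = ∑ l, Vhat l + V0hat - ∑ l, Vstar l) :
    V0star.PosSemidef ∧
    (∑ l, Vstar l + V0star = ∑ l, Vhat l + V0hat ∧
      V0star.trace + ∑ l, (Vstar l).trace =
        V0hat.trace + ∑ l, (Vhat l).trace) ∧
    ∀ l, (star (g l) ⬝ᵥ (Vstar l) *ᵥ (g l)).re =
        (star (g l) ⬝ᵥ (Vhat l) *ᵥ (g l)).re :=
  rank_one_reconstruction_general n L Vhat hVhat g c hc hcpos V0hat hV0hat vstar hvstar Vstar hVstar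
    V0star hV0star
end
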